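/- Let S be a ring, R a maximal subring of S, and I a nonzero two-sided ideal of S with R ∩ I = {0}. Then the following are equivalent: (1) there is an R-isomorphism from I onto the quotient ring R/ann_R(I) (where R acts on R/ann_R(I) by left and right multiplication through the quotient map); (2) the nonunital ring I has a multiplicative identity element; (3) I contains a nonzero idempotent e with ex = xe for all x ∈ I; (4) there is a nonzero R-homomorphism R → I; (5) there is a nonzero R-homomorphism I → R/ann_R(I) and ann_R(I) is a maximal two-sided ideal of R; (6) S is a central extension of R and I·I ≠ 0. -/

import Mathlib

/-!
Maximality of `R` is used through two subrings: comparing `R + K` with `R` shows that `S = R + I`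
and that every ideal of `S` inside `I` is `0` or `I`; and an element of `I` that commutes with `R`
is not in `R`, so its centralizer, a subring containing `R`, is all of `S`. Conditions (3), (4),
(6) each produce a nonzero central element `a ∈ I` with `aI ≠ 0`; then `aI = I`, so `a = au` with
`u ∈ I`, and `u` is the identity of `I`. Conversely, if `e` is the identity of `I`, it is a central
idempotent and `T = {s | se ∈ Re}` is a subring containing `R` and `e`, so `T = S`; sending `s` to
the class of `r` with `se = re` is a ring homomorphism `S → R/ann_R(I)` that is bijective on `I`.
For (5), preimages in `I` of ideals of `R` are ideals of `S`, so the dichotomy for ideals inside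
`I` matches maximality of `ann_R(I)` with injectivity on `I`.
-/

/-- `R` is a maximal subring of `S`. -/
def IsMaximalSubring {S : Type*} [Ring S] (R : Subring S) : Prop :=
  R ≠ ⊤ ∧ ∀ T : Subring S, R ≤ T → T = R ∨ T = ⊤

/-- `S` is a central extension of its subring `R`: `S` is generated as a left
`R`-module by the centralizer `C_S(R)`. -/
def IsCentralExtension {S : Type*} [Ring S] (R : Subring S) : Prop :=
  AddSubgroup.closure
    {s : S | ∃ r ∈ R, ∃ c : S, (∀ x ∈ R, c * x = x * c) ∧ s = r * c} = ⊤

section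

variable {S : Type*} [Ring S]

namespace Subring

def addTwoSidedIdeal (R : Subring S) (K : TwoSidedIdeal S) : Subring S where
  carrier := {s | ∃ r ∈ R, ∃ k ∈ K, r + k = s}
  zero_mem' := ⟨0, R.zero_mem, 0, K.zero_mem, add_zero 0⟩
  one_mem' := ⟨1, R.one_mem, 0, K.zero_mem, add_zero 1⟩
  add_mem' := by
    rintro _ _ ⟨r, hr, k, hk, rfl⟩ ⟨r', hr', k', hk', rfl⟩
    exact ⟨r + r', R.add_mem hr hr', k + k', K.add_mem hk hk', by abel⟩
  neg_mem' := by
    rintro _ ⟨r, hr, k, hk, rfl⟩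
    exact ⟨-r, R.neg_mem hr, -k, K.neg_mem hk, (neg_add r k).symm⟩
  mul_mem' := by
    rintro _ _ ⟨r, hr, k, hk, rfl⟩ ⟨r', hr', k', hk', rfl⟩
    exact ⟨r * r', R.mul_mem hr hr', r * k' + k * (r' + k'),
      K.add_mem (K.mul_mem_left _ _ hk') (K.mul_mem_right _ _ hk), by noncomm_ring⟩

def mulRightPreimage (R : Subring S) (e : S) (he : e ∈ centralizer (R : Set S)) :
    Subring S where
  carrier := {s | ∃ r ∈ R, s * e = r * e}
  zero_mem' := ⟨0, R.zero_mem, rfl⟩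
  one_mem' := ⟨1, R.one_mem, rfl⟩
  add_mem' := by
    rintro s t ⟨r, hr, hs⟩ ⟨r', hr', ht⟩
    exact ⟨r + r', R.add_mem hr hr', by rw [add_mul, add_mul, hs, ht]⟩
  neg_mem' := by
    rintro s ⟨r, hr, hs⟩
    exact ⟨-r, R.neg_mem hr, by rw [neg_mul, neg_mul, hs]⟩
  mul_mem' := by
    rintro s t ⟨r, hr, hs⟩ ⟨r', hr', ht⟩
    have hr'e : r' * e = e * r' := mem_centralizer_iff.1 he r' hr'
    refine ⟨r * r', R.mul_mem hr hr', ?_⟩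
    rw [mul_assoc, ht, hr'e, ← mul_assoc, hs, mul_assoc, ← hr'e, mul_assoc]

end Subring

namespace TwoSidedIdeal

def centralMul (K : TwoSidedIdeal S) (a : S) (ha : a ∈ Subring.center S) :
    TwoSidedIdeal S :=
  .mk' {y | ∃ x ∈ K, a * x = y} ⟨0, K.zero_mem, mul_zero a⟩
    (by
      rintro _ _ ⟨x, hx, rfl⟩ ⟨y, hy, rfl⟩
      exact ⟨x + y, K.add_mem hx hy, mul_add a x y⟩)
    (by
      rintro _ ⟨x, hx, rfl⟩
      exact ⟨-x, K.neg_mem hx, mul_neg a x⟩)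
    (by
      rintro s _ ⟨x, hx, rfl⟩
      exact ⟨s * x, K.mul_mem_left s x hx, by
        rw [← mul_assoc, ← Subring.mem_center_iff.1 ha s, mul_assoc]⟩)
    (by
      rintro _ s ⟨x, hx, rfl⟩
      exact ⟨x * s, K.mul_mem_right x s hx, (mul_assoc a x s).symm⟩)

theorem mem_centralMul {K : TwoSidedIdeal S} {a : S} {ha : a ∈ Subring.center S} {y : S} :
    y ∈ K.centralMul a ha ↔ ∃ x ∈ K, a * x = y :=
  mem_mk' _ _ _ _ _ _ y

theorem centralMul_le {K I : TwoSidedIdeal S} {a : S} (ha : a ∈ Subring.center S)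
    (haI : a ∈ I) : K.centralMul a ha ≤ I := by
  rintro _ hy
  obtain ⟨x, -, rfl⟩ := mem_centralMul.1 hy
  exact I.mul_mem_right a x haI

theorem exists_mem_ne_zero_of_ne_bot {I : TwoSidedIdeal S} (hI : I ≠ ⊥) : ∃ x ∈ I, x ≠ 0 := by
  by_contra! h
  exact hI (eq_bot_iff.2 fun x hx => (mem_bot S).2 (h x hx))

theorem coe_eq_coe_iff {A : Type*} [Ring A] (Z : TwoSidedIdeal A) (a b : A) :
    (a : Z.ringCon.Quotient) = b ↔ a - b ∈ Z := by
  rw [RingCon.eq, rel_iff]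

theorem coe_eq_zero_iff {A : Type*} [Ring A] (Z : TwoSidedIdeal A) (a : A) :
    (a : Z.ringCon.Quotient) = 0 ↔ a ∈ Z := by
  rw [← RingCon.coe_zero, Z.coe_eq_coe_iff, sub_zero]

end TwoSidedIdeal

section

variable {R : Subring S} {I : TwoSidedIdeal S}

theorem mem_center_of_isIdempotentElem {e : S} (heI : e ∈ I)
    (hidem : IsIdempotentElem e) (hcomm : ∀ x ∈ I, e * x = x * e) : e ∈ Subring.center S := by
  refine Subring.mem_center_iff.2 fun s => ?_
  have hse : e * (s * e) = s * e := by
    rw [hcomm _ (I.mul_mem_left s e heI), mul_assoc, hidem.eq]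
  have hes : e * s * e = e * s := by
    rw [← hcomm _ (I.mul_mem_right e s heI), ← mul_assoc, hidem.eq]
  rw [← hse, ← mul_assoc, hes]

theorem mem_center_of_forall_identity {e : S} (heI : e ∈ I)
    (hid : ∀ x ∈ I, e * x = x ∧ x * e = x) : e ∈ Subring.center S :=
  mem_center_of_isIdempotentElem heI (hid e heI).1 fun x hx => (hid x hx).1.trans (hid x hx).2.symm

theorem ne_zero_of_forall_identity (hI : I ≠ ⊥) {e : S}
    (hid : ∀ x ∈ I, e * x = x ∧ x * e = x) : e ≠ 0 := by
  rintro rfl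
  obtain ⟨x, hx, hx0⟩ := I.exists_mem_ne_zero_of_ne_bot hI
  exact hx0 ((hid x hx).1.symm.trans (zero_mul x))

theorem mem_centralizer_of_add_mem_centralizer
    (hRI : ∀ x : S, x ∈ R → x ∈ I → x = 0) {r i : S} (hr : r ∈ R) (hi : i ∈ I)
    (hc : r + i ∈ Subring.centralizer (R : Set S)) : i ∈ Subring.centralizer (R : Set S) := by
  refine Subring.mem_centralizer_iff.2 fun x hx => ?_
  have hcx := Subring.mem_centralizer_iff.1 hc x hx
  rw [mul_add, add_mul] at hcx
  have hcomm : x * i - i * x = r * x - x * r := by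
    rw [sub_eq_sub_iff_add_eq_add, add_comm (x * i), hcx]
  have hmem : r * x - x * r ∈ I :=
    hcomm ▸ I.sub_mem (I.mul_mem_left x i hi) (I.mul_mem_right i x hi)
  rw [← sub_eq_zero, hcomm]
  exact hRI _ (R.sub_mem (R.mul_mem hr hx) (R.mul_mem hx hr)) hmem

theorem IsCentralExtension.exists_mem_centralizer_not_mem
    (hce : IsCentralExtension R) (hR : R ≠ ⊤) :
    ∃ c ∈ Subring.centralizer (R : Set S), c ∉ R := by
  by_contra! h
  refine hR (eq_top_iff.2 fun s _ => ?_)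
  have hle : AddSubgroup.closure
      {s : S | ∃ r ∈ R, ∃ c : S, (∀ x ∈ R, c * x = x * c) ∧ s = r * c} ≤ R.toAddSubgroup := by
    rw [AddSubgroup.closure_le]
    rintro _ ⟨r, hr, c, hc, rfl⟩
    exact R.mul_mem hr (h c (Subring.mem_centralizer_iff.2 fun x hx => (hc x hx).symm))
  exact hle (hce.symm ▸ AddSubgroup.mem_top s)

end

namespace IsMaximalSubring

variable {R : Subring S} {I : TwoSidedIdeal S}

theorem eq_top_of_le_of_mem (hmax : IsMaximalSubring R) {T : Subring S} (hRT : R ≤ T)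
    {x : S} (hxT : x ∈ T) (hxR : x ∉ R) : T = ⊤ :=
  (hmax.2 T hRT).resolve_left fun h => hxR (h ▸ hxT)

theorem mem_center_of_mem_centralizer (hmax : IsMaximalSubring R) {c : S}
    (hc : c ∈ Subring.centralizer (R : Set S)) (hcR : c ∉ R) : c ∈ Subring.center S := by
  have hRc : R ≤ Subring.centralizer {c} := fun r hr =>
    Subring.mem_centralizer_iff.2 fun _ hg =>
      (Set.mem_singleton_iff.1 hg) ▸ (Subring.mem_centralizer_iff.1 hc r hr).symm
  have hcc : c ∈ Subring.centralizer {c} :=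
    Subring.mem_centralizer_iff.2 fun _ hg => (Set.mem_singleton_iff.1 hg) ▸ rfl
  exact Set.singleton_subset_iff.1 <| Subring.centralizer_eq_top_iff_subset.1 <|
    hmax.eq_top_of_le_of_mem hRc hcc hcR

theorem forall_mem_or_forall_exists_add_eq (hmax : IsMaximalSubring R) (K : TwoSidedIdeal S) :
    (∀ k ∈ K, k ∈ R) ∨ ∀ s, ∃ r ∈ R, ∃ k ∈ K, r + k = s := by
  refine (hmax.2 (R.addTwoSidedIdeal K) fun r hr => ⟨r, hr, 0, K.zero_mem, add_zero r⟩).imp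
    (fun h k hk => ?_) (fun h s => ?_)
  · exact h ▸ (⟨0, R.zero_mem, k, hk, zero_add k⟩ : k ∈ R.addTwoSidedIdeal K)
  · exact (h ▸ Subring.mem_top s : s ∈ R.addTwoSidedIdeal K)

theorem exists_add_eq (hmax : IsMaximalSubring R) (hI : I ≠ ⊥)
    (hRI : ∀ x : S, x ∈ R → x ∈ I → x = 0) (s : S) : ∃ r ∈ R, ∃ i ∈ I, r + i = s := by
  refine (hmax.forall_mem_or_forall_exists_add_eq I).resolve_left (fun h => hI ?_) s
  exact eq_bot_iff.2 fun x hx => (TwoSidedIdeal.mem_bot S).2 (hRI x (h x hx) hx)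

theorem eq_bot_or_le (hmax : IsMaximalSubring R) (hRI : ∀ x : S, x ∈ R → x ∈ I → x = 0)
    {K : TwoSidedIdeal S} (hKI : K ≤ I) : K = ⊥ ∨ I ≤ K := by
  refine (hmax.forall_mem_or_forall_exists_add_eq K).imp (fun h => ?_) (fun h x hx => ?_)
  · exact eq_bot_iff.2 fun k hk => (TwoSidedIdeal.mem_bot S).2 (hRI k (h k hk) (hKI hk))
  · obtain ⟨r, hr, k, hk, rfl⟩ := h x
    have hr0 : r = 0 := hRI r hr (by simpa using I.sub_mem hx (hKI hk))
    simpa [hr0] using hk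

theorem le_centralMul (hmax : IsMaximalSubring R) (hRI : ∀ x : S, x ∈ R → x ∈ I → x = 0)
    {a : S} (haI : a ∈ I) (ha : a ∈ Subring.center S) {K : TwoSidedIdeal S}
    (hne : ∃ x ∈ K, a * x ≠ 0) : I ≤ K.centralMul a ha := by
  refine (hmax.eq_bot_or_le hRI (TwoSidedIdeal.centralMul_le ha haI)).resolve_left fun h => ?_
  obtain ⟨x, hx, hax⟩ := hne
  exact hax ((TwoSidedIdeal.mem_bot S).1 (h ▸ TwoSidedIdeal.mem_centralMul.2 ⟨x, hx, rfl⟩))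

theorem exists_identity_of_mem_center (hmax : IsMaximalSubring R)
    (hRI : ∀ x : S, x ∈ R → x ∈ I → x = 0) {a : S} (haI : a ∈ I) (ha : a ∈ Subring.center S)
    (hne : ∃ x ∈ I, a * x ≠ 0) : ∃ e ∈ I, ∀ x ∈ I, e * x = x ∧ x * e = x := by
  have hIa := hmax.le_centralMul hRI haI ha hne
  obtain ⟨u, hu, hau⟩ := TwoSidedIdeal.mem_centralMul.1 (hIa haI)
  refine ⟨u, hu, fun x hx => ?_⟩
  obtain ⟨v, -, rfl⟩ := TwoSidedIdeal.mem_centralMul.1 (hIa hx)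
  have hac := Subring.mem_center_iff.1 ha
  exact ⟨by rw [← mul_assoc, hac u, hau], by rw [← hac v, mul_assoc, hau]⟩

theorem exists_identity_of_isIdempotentElem (hmax : IsMaximalSubring R)
    (hRI : ∀ x : S, x ∈ R → x ∈ I → x = 0) {e : S} (heI : e ∈ I) (he : e ∈ Subring.center S)
    (hidem : IsIdempotentElem e) (he0 : e ≠ 0) : ∃ e ∈ I, ∀ x ∈ I, e * x = x ∧ x * e = x :=
  hmax.exists_identity_of_mem_center hRI heI he ⟨e, heI, by rwa [hidem.eq]⟩

theorem exists_mul_ne_zero_of_mem_center (hmax : IsMaximalSubring R)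
    (hRI : ∀ x : S, x ∈ R → x ∈ I → x = 0) {a : S} (haI : a ∈ I) (ha : a ∈ Subring.center S)
    (ha0 : a ≠ 0) (hII : ∃ x ∈ I, ∃ y ∈ I, x * y ≠ 0) : ∃ y ∈ I, a * y ≠ 0 := by
  obtain ⟨x, hx, y, hy, hxy⟩ := hII
  have hIa := hmax.le_centralMul hRI haI ha (K := ⊤) ⟨1, trivial, by rwa [mul_one]⟩
  obtain ⟨s, -, rfl⟩ := TwoSidedIdeal.mem_centralMul.1 (hIa hx)
  refine ⟨y, hy, fun h => hxy ?_⟩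
  rw [← Subring.mem_center_iff.1 ha s, mul_assoc, h, mul_zero]

theorem exists_mul_eq_mul (hmax : IsMaximalSubring R) {e : S}
    (hc : e ∈ Subring.centralizer (R : Set S)) (hidem : IsIdempotentElem e) (heR : e ∉ R)
    (s : S) : ∃ r : R, s * e = r * e := by
  have hT := hmax.eq_top_of_le_of_mem (T := R.mulRightPreimage e hc) (fun r hr => ⟨r, hr, rfl⟩)
    ⟨1, R.one_mem, by rw [hidem.eq, one_mul]⟩ heR
  obtain ⟨r, hr, h⟩ := (hT ▸ Subring.mem_top s : s ∈ R.mulRightPreimage e hc)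
  exact ⟨⟨r, hr⟩, h⟩

theorem exists_ringHom_quotient (hmax : IsMaximalSubring R) {e : S}
    (he : e ∈ Subring.center S) (hidem : IsIdempotentElem e) (heR : e ∉ R)
    {Z : TwoSidedIdeal R} (hZe : ∀ a : R, a ∈ Z ↔ (a : S) * e = 0) :
    ∃ f : S →+* Z.ringCon.Quotient, ∀ (s : S) (a : R), f s = a ↔ s * e = a * e := by
  have hce := Subring.mem_center_iff.1 he
  choose ρ hρ using hmax.exists_mul_eq_mul
    (Subring.mem_centralizer_iff.2 fun r _ => hce r) hidem heR
  have hf (s : S) (a : R) : (ρ s : Z.ringCon.Quotient) = a ↔ s * e = a * e := by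
    rw [Z.coe_eq_coe_iff, hZe, AddSubgroupClass.coe_sub, sub_mul, sub_eq_zero, hρ s]
  refine ⟨⟨⟨⟨fun s => ρ s, ?_⟩, ?_⟩, ?_, ?_⟩, hf⟩
  · rw [← RingCon.coe_one, hf, Subring.coe_one]
  · intro s t
    rw [← RingCon.coe_mul, hf, Subring.coe_mul]
    calc s * t * e = s * e * ρ t := by rw [mul_assoc, hρ t, hce, mul_assoc]
      _ = ρ s * ρ t * e := by rw [hρ s, mul_assoc, ← hce, mul_assoc]
  · rw [← RingCon.coe_zero, hf, Subring.coe_zero]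
  · intro s t
    rw [← RingCon.coe_add, hf, Subring.coe_add, add_mul, add_mul, hρ s, hρ t]

end IsMaximalSubring

structure IsRHomOn {R : Subring S} (I : TwoSidedIdeal S) (Z : TwoSidedIdeal R)
    (f : S → Z.ringCon.Quotient) : Prop where
  map_add : ∀ i ∈ I, ∀ j ∈ I, f (i + j) = f i + f j
  map_mul_left : ∀ r : R, ∀ i ∈ I, f ((r : S) * i) = (r : Z.ringCon.Quotient) * f i
  map_mul_right : ∀ r : R, ∀ i ∈ I, f (i * (r : S)) = f i * (r : Z.ringCon.Quotient)
  map_mul : ∀ i ∈ I, ∀ j ∈ I, f (i * j) = f i * f j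

namespace IsRHomOn

variable {R : Subring S} {I : TwoSidedIdeal S} {Z : TwoSidedIdeal R}
  {f : S → Z.ringCon.Quotient}

theorem of_ringHom (f : S →+* Z.ringCon.Quotient) (hf : ∀ r : R, f r = r) : IsRHomOn I Z f :=
  ⟨fun i _ j _ => _root_.map_add f i j, fun r i _ => by rw [_root_.map_mul, hf],
    fun r i _ => by rw [_root_.map_mul, hf], fun i _ j _ => _root_.map_mul f i j⟩

theorem map_zero (hf : IsRHomOn I Z f) : f 0 = 0 := by
  simpa using hf.map_add 0 I.zero_mem 0 I.zero_mem

theorem map_neg (hf : IsRHomOn I Z f) {i : S} (hi : i ∈ I) : f (-i) = -f i :=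
  eq_neg_of_add_eq_zero_left <| by
    rw [← hf.map_add _ (I.neg_mem hi) _ hi, neg_add_cancel, hf.map_zero]

theorem map_sub (hf : IsRHomOn I Z f) {i j : S} (hi : i ∈ I) (hj : j ∈ I) :
    f (i - j) = f i - f j := by
  rw [sub_eq_add_neg, hf.map_add _ hi _ (I.neg_mem hj), hf.map_neg hj, sub_eq_add_neg]

theorem forall_identity_of_map_eq_one (hf : IsRHomOn I Z f) (hinj : Set.InjOn f I) {e : S}
    (heI : e ∈ I) (he : f e = 1) : ∀ x ∈ I, e * x = x ∧ x * e = x := fun x hx =>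
  ⟨hinj (I.mul_mem_left e x hx) hx (by rw [hf.map_mul e heI x hx, he, one_mul]),
    hinj (I.mul_mem_right x e hx) hx (by rw [hf.map_mul x hx e heI, he, mul_one])⟩

def comap (hf : IsRHomOn I Z f) (hsplit : ∀ s, ∃ r ∈ R, ∃ i ∈ I, r + i = s)
    (J : TwoSidedIdeal R) : TwoSidedIdeal S :=
  .mk' {i | i ∈ I ∧ ∃ j ∈ J, f i = j}
    ⟨I.zero_mem, 0, J.zero_mem, by rw [hf.map_zero, RingCon.coe_zero]⟩
    (by
      rintro x y ⟨hx, a, ha, hfx⟩ ⟨hy, b, hb, hfy⟩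
      exact ⟨I.add_mem hx hy, a + b, J.add_mem ha hb,
        by rw [hf.map_add x hx y hy, hfx, hfy, RingCon.coe_add]⟩)
    (by
      rintro x ⟨hx, a, ha, hfx⟩
      exact ⟨I.neg_mem hx, -a, J.neg_mem ha, by rw [hf.map_neg hx, hfx, RingCon.coe_neg]⟩)
    (by
      rintro s x ⟨hx, a, ha, hfx⟩
      obtain ⟨r, hr, i, hi, rfl⟩ := hsplit s
      obtain ⟨b, hb⟩ : ∃ b : R, (b : Z.ringCon.Quotient) = f i := Quot.exists_rep _
      refine ⟨I.mul_mem_left _ x hx, ⟨r, hr⟩ * a + b * a,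
        J.add_mem (J.mul_mem_left _ _ ha) (J.mul_mem_left _ _ ha), ?_⟩
      rw [add_mul, hf.map_add _ (I.mul_mem_left r x hx) _ (I.mul_mem_left i x hx),
        hf.map_mul_left ⟨r, hr⟩ x hx, hf.map_mul i hi x hx, hfx, ← hb, RingCon.coe_add,
        RingCon.coe_mul, RingCon.coe_mul])
    (by
      rintro x s ⟨hx, a, ha, hfx⟩
      obtain ⟨r, hr, i, hi, rfl⟩ := hsplit s
      obtain ⟨b, hb⟩ : ∃ b : R, (b : Z.ringCon.Quotient) = f i := Quot.exists_rep _
      refine ⟨I.mul_mem_right x _ hx, a * ⟨r, hr⟩ + a * b,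
        J.add_mem (J.mul_mem_right _ _ ha) (J.mul_mem_right _ _ ha), ?_⟩
      rw [mul_add, hf.map_add _ (I.mul_mem_right x r hx) _ (I.mul_mem_right x i hx),
        hf.map_mul_right ⟨r, hr⟩ x hx, hf.map_mul x hx i hi, hfx, ← hb, RingCon.coe_add,
        RingCon.coe_mul, RingCon.coe_mul])

theorem mem_comap {hf : IsRHomOn I Z f} {hsplit : ∀ s, ∃ r ∈ R, ∃ i ∈ I, r + i = s}
    {J : TwoSidedIdeal R} {x : S} : x ∈ hf.comap hsplit J ↔ x ∈ I ∧ ∃ j ∈ J, f x = j :=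
  TwoSidedIdeal.mem_mk' _ _ _ _ _ _ x

def range (hf : IsRHomOn I Z f) : TwoSidedIdeal R :=
  .mk' {a | ∃ i ∈ I, f i = a}
    ⟨0, I.zero_mem, by rw [hf.map_zero, RingCon.coe_zero]⟩
    (by
      rintro a b ⟨i, hi, hfi⟩ ⟨j, hj, hfj⟩
      exact ⟨i + j, I.add_mem hi hj, by rw [hf.map_add i hi j hj, hfi, hfj, RingCon.coe_add]⟩)
    (by
      rintro a ⟨i, hi, hfi⟩
      exact ⟨-i, I.neg_mem hi, by rw [hf.map_neg hi, hfi, RingCon.coe_neg]⟩)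
    (by
      rintro r a ⟨i, hi, hfi⟩
      exact ⟨r * i, I.mul_mem_left _ _ hi, by rw [hf.map_mul_left r i hi, hfi, RingCon.coe_mul]⟩)
    (by
      rintro a r ⟨i, hi, hfi⟩
      exact ⟨i * r, I.mul_mem_right _ _ hi,
        by rw [hf.map_mul_right r i hi, hfi, RingCon.coe_mul]⟩)

theorem mem_range {hf : IsRHomOn I Z f} {a : R} : a ∈ hf.range ↔ ∃ i ∈ I, f i = a :=
  TwoSidedIdeal.mem_mk' _ _ _ _ _ _ a

theorem injOn (hf : IsRHomOn I Z f) (hmax : IsMaximalSubring R) (hI : I ≠ ⊥)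
    (hRI : ∀ x : S, x ∈ R → x ∈ I → x = 0) (hne : ∃ i ∈ I, f i ≠ 0) : Set.InjOn f I := by
  set K := hf.comap (hmax.exists_add_eq hI hRI) ⊥
  have hK : K = ⊥ := by
    refine (hmax.eq_bot_or_le hRI fun x hx => (mem_comap.1 hx).1).resolve_right fun h => ?_
    obtain ⟨i, hi, hfi⟩ := hne
    obtain ⟨-, j, hj, hfj⟩ := mem_comap.1 (h hi)
    rw [(TwoSidedIdeal.mem_bot _).1 hj, RingCon.coe_zero] at hfj
    exact hfi hfj
  intro x hx y hy hxy
  have hxyK : x - y ∈ K := mem_comap.2 ⟨I.sub_mem hx hy, 0, TwoSidedIdeal.zero_mem _,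
    by rw [hf.map_sub hx hy, hxy, sub_self, RingCon.coe_zero]⟩
  rw [hK] at hxyK
  exact sub_eq_zero.1 ((TwoSidedIdeal.mem_bot S).1 hxyK)

theorem exists_map_eq_one (hf : IsRHomOn I Z f) (hne : ∃ i ∈ I, f i ≠ 0)
    (hZmax : ∀ J : TwoSidedIdeal R, Z ≤ J → J = Z ∨ J = ⊤) : ∃ e ∈ I, f e = 1 := by
  have hZle : Z ≤ hf.range := fun z hz =>
    mem_range.2 ⟨0, I.zero_mem, by rw [hf.map_zero, eq_comm, Z.coe_eq_zero_iff]; exact hz⟩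
  have hrange : hf.range = ⊤ := by
    refine (hZmax _ hZle).resolve_left fun h => ?_
    obtain ⟨i, hi, hfi⟩ := hne
    obtain ⟨a, ha⟩ : ∃ a : R, (a : Z.ringCon.Quotient) = f i := Quot.exists_rep _
    have haZ : a ∈ Z := h ▸ mem_range.2 ⟨i, hi, ha.symm⟩
    exact hfi (ha ▸ (Z.coe_eq_zero_iff a).2 haZ)
  obtain ⟨e, he, hfe⟩ := mem_range.1 (hf.range.one_mem_iff.2 hrange)
  exact ⟨e, he, hfe.trans (RingCon.coe_one _)⟩

theorem eq_or_eq_top (hf : IsRHomOn I Z f) (hmax : IsMaximalSubring R) (hI : I ≠ ⊥)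
    (hRI : ∀ x : S, x ∈ R → x ∈ I → x = 0) (hsurj : ∀ q, ∃ i ∈ I, f i = q)
    (J : TwoSidedIdeal R) (hZJ : Z ≤ J) : J = Z ∨ J = ⊤ := by
  set K := hf.comap (hmax.exists_add_eq hI hRI) J
  refine (hmax.eq_bot_or_le hRI (K := K) fun x hx => (mem_comap.1 hx).1).imp
    (fun h => le_antisymm (fun j hj => ?_) hZJ) (fun h => ?_)
  · obtain ⟨i, hi, hfi⟩ := hsurj j
    have hiK : i ∈ K := mem_comap.2 ⟨hi, j, hj, hfi⟩
    rw [h, TwoSidedIdeal.mem_bot] at hiK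
    rw [← Z.coe_eq_zero_iff, ← hfi, hiK, hf.map_zero]
  · obtain ⟨i, hi, hfi⟩ := hsurj 1
    obtain ⟨-, j, hj, hfj⟩ := mem_comap.1 (h hi)
    have h1j : 1 - j ∈ Z := (Z.coe_eq_coe_iff 1 j).1 (by rw [RingCon.coe_one, ← hfi, hfj])
    exact J.one_mem_iff.1 (by simpa using J.add_mem (hZJ h1j) hj)

end IsRHomOn

def ExistsRIsoToQuotient (R : Subring S) (I : TwoSidedIdeal S) (Z : TwoSidedIdeal R) : Prop :=
  ∃ f : S → Z.ringCon.Quotient,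
    (∀ i ∈ I, ∀ j ∈ I, f (i + j) = f i + f j) ∧
    (∀ r : R, ∀ i ∈ I, f ((r : S) * i) = (r : Z.ringCon.Quotient) * f i) ∧
    (∀ r : R, ∀ i ∈ I, f (i * (r : S)) = f i * (r : Z.ringCon.Quotient)) ∧
    (∀ i ∈ I, ∀ j ∈ I, f (i * j) = f i * f j) ∧
    (∀ i ∈ I, ∀ j ∈ I, f i = f j → i = j) ∧
    (∀ q : Z.ringCon.Quotient, ∃ i ∈ I, f i = q)

def TwoSidedIdeal.HasIdentity (I : TwoSidedIdeal S) : Prop :=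
  ∃ e ∈ I, ∀ x ∈ I, e * x = x ∧ x * e = x

def TwoSidedIdeal.HasCommutingIdempotent (I : TwoSidedIdeal S) : Prop :=
  ∃ e ∈ I, e ≠ 0 ∧ e * e = e ∧ ∀ x ∈ I, e * x = x * e

def ExistsRHomToIdeal (R : Subring S) (I : TwoSidedIdeal S) : Prop :=
  ∃ g : S → S,
    (∀ r ∈ R, g r ∈ I) ∧
    (∀ r ∈ R, ∀ r' ∈ R, g (r + r') = g r + g r') ∧
    (∀ r ∈ R, ∀ x ∈ R, g (r * x) = r * g x) ∧
    (∀ r ∈ R, ∀ x ∈ R, g (x * r) = g x * r) ∧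
    (∀ r ∈ R, ∀ x ∈ R, g (r * x) = g r * g x) ∧
    (∃ r ∈ R, g r ≠ 0)

def ExistsRHomToQuotientAndIsMaximal (R : Subring S) (I : TwoSidedIdeal S)
    (Z : TwoSidedIdeal R) : Prop :=
  (∃ f : S → Z.ringCon.Quotient,
      (∀ i ∈ I, ∀ j ∈ I, f (i + j) = f i + f j) ∧
      (∀ r : R, ∀ i ∈ I, f ((r : S) * i) = (r : Z.ringCon.Quotient) * f i) ∧
      (∀ r : R, ∀ i ∈ I, f (i * (r : S)) = f i * (r : Z.ringCon.Quotient)) ∧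
      (∀ i ∈ I, ∀ j ∈ I, f (i * j) = f i * f j) ∧
      (∃ i ∈ I, f i ≠ 0)) ∧
    (Z ≠ ⊤ ∧ ∀ J : TwoSidedIdeal R, Z ≤ J → J = Z ∨ J = ⊤)

section Conditions

variable {R : Subring S} {I : TwoSidedIdeal S} {Z : TwoSidedIdeal R}

theorem mem_iff_mul_eq_zero (hZ : ∀ x : R, x ∈ Z ↔ ∀ i ∈ I, (x : S) * i = 0 ∧ i * (x : S) = 0)
    {e : S} (heI : e ∈ I) (hid : ∀ x ∈ I, e * x = x ∧ x * e = x) (a : R) :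
    a ∈ Z ↔ (a : S) * e = 0 := by
  refine ⟨fun ha => ((hZ a).1 ha e heI).1, fun hae => (hZ a).2 fun i hi => ⟨?_, ?_⟩⟩
  · rw [← (hid i hi).1, ← mul_assoc, hae, zero_mul]
  · rw [← (hid i hi).2, mul_assoc,
      ← Subring.mem_center_iff.1 (mem_center_of_forall_identity heI hid), hae, mul_zero]

theorem hasIdentity_of_existsRIsoToQuotient : ExistsRIsoToQuotient R I Z → I.HasIdentity := by
  rintro ⟨f, hadd, hl, hr, hm, hinj, hsurj⟩
  obtain ⟨e, heI, hfe⟩ := hsurj 1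
  exact ⟨e, heI, IsRHomOn.forall_identity_of_map_eq_one ⟨hadd, hl, hr, hm⟩
    (fun i hi j hj => hinj i hi j hj) heI hfe⟩

theorem existsRIsoToQuotient_of_hasIdentity (hmax : IsMaximalSubring R) (hI : I ≠ ⊥)
    (hRI : ∀ x : S, x ∈ R → x ∈ I → x = 0)
    (hZ : ∀ x : R, x ∈ Z ↔ ∀ i ∈ I, (x : S) * i = 0 ∧ i * (x : S) = 0) :
    I.HasIdentity → ExistsRIsoToQuotient R I Z := by
  rintro ⟨e, heI, hid⟩
  have hidem : IsIdempotentElem e := (hid e heI).1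
  obtain ⟨f, hf⟩ := hmax.exists_ringHom_quotient (mem_center_of_forall_identity heI hid) hidem
    (fun h => ne_zero_of_forall_identity hI hid (hRI e h heI)) (mem_iff_mul_eq_zero hZ heI hid)
  obtain ⟨hadd, hl, hr, hm⟩ : IsRHomOn I Z f := .of_ringHom f fun r => (hf r r).2 rfl
  refine ⟨f, hadd, hl, hr, hm, fun i hi j hj hij => ?_, fun q => ?_⟩
  · obtain ⟨a, ha⟩ : ∃ a : R, (a : Z.ringCon.Quotient) = f j := Quot.exists_rep _
    rw [← (hid i hi).2, ← (hid j hj).2, (hf i a).1 (hij.trans ha.symm), (hf j a).1 ha.symm]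
  · obtain ⟨a, rfl⟩ : ∃ a : R, (a : Z.ringCon.Quotient) = q := Quot.exists_rep _
    exact ⟨a * e, I.mul_mem_left _ _ heI, (hf _ a).2 (by rw [mul_assoc, hidem.eq])⟩

theorem hasCommutingIdempotent_of_hasIdentity (hI : I ≠ ⊥) :
    I.HasIdentity → I.HasCommutingIdempotent := by
  rintro ⟨e, heI, hid⟩
  exact ⟨e, heI, ne_zero_of_forall_identity hI hid, (hid e heI).1,
    fun x hx => (hid x hx).1.trans (hid x hx).2.symm⟩

theorem hasIdentity_of_hasCommutingIdempotent (hmax : IsMaximalSubring R)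
    (hRI : ∀ x : S, x ∈ R → x ∈ I → x = 0) : I.HasCommutingIdempotent → I.HasIdentity := by
  rintro ⟨e, heI, he0, hidem, hcomm⟩
  exact hmax.exists_identity_of_isIdempotentElem hRI heI
    (mem_center_of_isIdempotentElem heI hidem hcomm) hidem he0

theorem existsRHomToIdeal_of_hasIdentity (hI : I ≠ ⊥) : I.HasIdentity → ExistsRHomToIdeal R I := by
  rintro ⟨e, heI, hid⟩
  have hc := Subring.mem_center_iff.1 (mem_center_of_forall_identity heI hid)
  have hl (r x : S) : e * (r * x) = r * (e * x) := by rw [← mul_assoc, ← hc r, mul_assoc]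
  refine ⟨(e * ·), fun r _ => I.mul_mem_right e r heI, fun r _ r' _ => mul_add e r r',
    fun r _ x _ => hl r x, fun r _ x _ => (mul_assoc e x r).symm, fun r _ x _ => ?_,
    1, R.one_mem, by simpa using ne_zero_of_forall_identity hI hid⟩
  calc e * (r * x) = r * (e * (e * x)) := by rw [hl, ← mul_assoc e e, (hid e heI).1]
    _ = e * r * (e * x) := by rw [← hl, mul_assoc]

theorem hasIdentity_of_existsRHomToIdeal (hmax : IsMaximalSubring R)
    (hRI : ∀ x : S, x ∈ R → x ∈ I → x = 0) : ExistsRHomToIdeal R I → I.HasIdentity := by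
  rintro ⟨g, hgI, -, hgl, hgr, hgm, r₀, hr₀, hg₀⟩
  have heI : g 1 ∈ I := hgI 1 R.one_mem
  have hle (r : S) (hr : r ∈ R) : g r = r * g 1 := by simpa using hgl r hr 1 R.one_mem
  have hri (r : S) (hr : r ∈ R) : g r = g 1 * r := by simpa using hgr r hr 1 R.one_mem
  have hidem : g 1 * g 1 = g 1 := by simpa using (hgm 1 R.one_mem 1 R.one_mem).symm
  have he0 : g 1 ≠ 0 := fun h => hg₀ (by rw [hle r₀ hr₀, h, mul_zero])
  have hc : g 1 ∈ Subring.centralizer (R : Set S) :=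
    Subring.mem_centralizer_iff.2 fun r hr => (hle r hr).symm.trans (hri r hr)
  exact hmax.exists_identity_of_isIdempotentElem hRI heI
    (hmax.mem_center_of_mem_centralizer hc fun h => he0 (hRI _ h heI))
    hidem he0

theorem existsRHomToQuotientAndIsMaximal_of_existsRIsoToQuotient (hmax : IsMaximalSubring R)
    (hI : I ≠ ⊥) (hRI : ∀ x : S, x ∈ R → x ∈ I → x = 0) :
    ExistsRIsoToQuotient R I Z → ExistsRHomToQuotientAndIsMaximal R I Z := by
  rintro ⟨f, hadd, hl, hr, hm, hinj, hsurj⟩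
  have hf : IsRHomOn I Z f := ⟨hadd, hl, hr, hm⟩
  obtain ⟨i, hi, hi0⟩ := I.exists_mem_ne_zero_of_ne_bot hI
  have hfi : f i ≠ 0 := fun h => hi0 (hinj i hi 0 I.zero_mem (h.trans hf.map_zero.symm))
  refine ⟨⟨f, hadd, hl, hr, hm, i, hi, hfi⟩, fun hZtop => hfi ?_, hf.eq_or_eq_top hmax hI hRI hsurj⟩
  obtain ⟨a, ha⟩ : ∃ a : R, (a : Z.ringCon.Quotient) = f i := Quot.exists_rep _
  rw [← ha, Z.coe_eq_zero_iff, hZtop]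
  trivial

theorem hasIdentity_of_existsRHomToQuotientAndIsMaximal (hmax : IsMaximalSubring R)
    (hI : I ≠ ⊥) (hRI : ∀ x : S, x ∈ R → x ∈ I → x = 0) :
    ExistsRHomToQuotientAndIsMaximal R I Z → I.HasIdentity := by
  rintro ⟨⟨f, hadd, hl, hr, hm, hne⟩, -, hZmax⟩
  have hf : IsRHomOn I Z f := ⟨hadd, hl, hr, hm⟩
  obtain ⟨e, heI, hfe⟩ := hf.exists_map_eq_one hne hZmax
  exact ⟨e, heI, hf.forall_identity_of_map_eq_one (hf.injOn hmax hI hRI hne) heI hfe⟩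

theorem isCentralExtension_of_hasIdentity (hmax : IsMaximalSubring R) (hI : I ≠ ⊥)
    (hRI : ∀ x : S, x ∈ R → x ∈ I → x = 0) :
    I.HasIdentity → IsCentralExtension R ∧ ∃ x ∈ I, ∃ y ∈ I, x * y ≠ 0 := by
  rintro ⟨e, heI, hid⟩
  have he0 := ne_zero_of_forall_identity hI hid
  have hc := mem_center_of_forall_identity heI hid
  refine ⟨(AddSubgroup.eq_top_iff' _).2 fun s => ?_, e, heI, e, heI, by rwa [(hid e heI).1]⟩
  obtain ⟨r, hr, i, hi, rfl⟩ := hmax.exists_add_eq hI hRI s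
  obtain ⟨r', hi'⟩ := hmax.exists_mul_eq_mul (Subring.center_le_centralizer _ hc)
    (hid e heI).1 (fun h => he0 (hRI e h heI)) i
  rw [(hid i hi).2] at hi'
  rw [hi']
  exact add_mem
    (AddSubgroup.subset_closure ⟨r, hr, 1, fun x _ => by rw [one_mul, mul_one], (mul_one r).symm⟩)
    (AddSubgroup.subset_closure
      ⟨r', r'.2, e, fun x _ => (Subring.mem_center_iff.1 hc x).symm, rfl⟩)

theorem hasIdentity_of_isCentralExtension (hmax : IsMaximalSubring R) (hI : I ≠ ⊥)
    (hRI : ∀ x : S, x ∈ R → x ∈ I → x = 0) :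
    IsCentralExtension R ∧ (∃ x ∈ I, ∃ y ∈ I, x * y ≠ 0) → I.HasIdentity := by
  rintro ⟨hce, hII⟩
  obtain ⟨c, hc, hcR⟩ := hce.exists_mem_centralizer_not_mem hmax.1
  obtain ⟨r, hr, i, hi, rfl⟩ := hmax.exists_add_eq hI hRI c
  have hiR : i ∉ R := fun h => hcR (R.add_mem hr h)
  have hic := hmax.mem_center_of_mem_centralizer
    (mem_centralizer_of_add_mem_centralizer hRI hr hi hc) hiR
  exact hmax.exists_identity_of_mem_center hRI hi hic
    (hmax.exists_mul_ne_zero_of_mem_center hRI hi hic (fun h => hiR (h ▸ R.zero_mem)) hII)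

end Conditions

end

/-- Let `R` be a maximal subring of `S` and `I` a nonzero two-sided
ideal of `S` with `R ∩ I = {0}`, and let `Z = ann_R(I)` (a two-sided ideal of `R`).
TFAE: (1) there is an `R`-isomorphism `I ≅ R/ann_R(I)`; (2) `I` has a multiplicative
identity; (3) `I` contains a nonzero idempotent commuting with all of `I`; (4) there is
a nonzero `R`-homomorphism `R → I`; (5) there is a nonzero `R`-homomorphism
`I → R/ann_R(I)` and `ann_R(I)` is a maximal two-sided ideal of `R`; (6) `S` is a
central extension of `R` and `I·I ≠ 0`. -/
theorem stmt15 {S : Type*} [Ring S] (R : Subring S) (hmax : IsMaximalSubring R)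
    (I : TwoSidedIdeal S) (hI : I ≠ ⊥)
    (hRI : ∀ x : S, x ∈ R → x ∈ I → x = 0)
    (Z : TwoSidedIdeal R)
    (hZ : ∀ x : R, x ∈ Z ↔ ∀ i ∈ I, (x : S) * i = 0 ∧ i * (x : S) = 0) :
    -- (1): an `R`-isomorphism `I → R/ann_R(I)`
    ((∃ f : S → Z.ringCon.Quotient,
        (∀ i ∈ I, ∀ j ∈ I, f (i + j) = f i + f j) ∧
        (∀ r : R, ∀ i ∈ I, f ((r : S) * i) = (r : Z.ringCon.Quotient) * f i) ∧
        (∀ r : R, ∀ i ∈ I, f (i * (r : S)) = f i * (r : Z.ringCon.Quotient)) ∧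
        (∀ i ∈ I, ∀ j ∈ I, f (i * j) = f i * f j) ∧
        (∀ i ∈ I, ∀ j ∈ I, f i = f j → i = j) ∧
        (∀ q : Z.ringCon.Quotient, ∃ i ∈ I, f i = q)) ↔
      -- (2): `I` has a multiplicative identity element
      (∃ e ∈ I, ∀ x ∈ I, e * x = x ∧ x * e = x)) ∧
    ((∃ e ∈ I, ∀ x ∈ I, e * x = x ∧ x * e = x) ↔
      -- (3): a nonzero idempotent of `I` commuting with all of `I`
      (∃ e ∈ I, e ≠ 0 ∧ e * e = e ∧ ∀ x ∈ I, e * x = x * e)) ∧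
    ((∃ e ∈ I, e ≠ 0 ∧ e * e = e ∧ ∀ x ∈ I, e * x = x * e) ↔
      -- (4): a nonzero `R`-homomorphism `R → I`
      (∃ g : S → S,
        (∀ r ∈ R, g r ∈ I) ∧
        (∀ r ∈ R, ∀ r' ∈ R, g (r + r') = g r + g r') ∧
        (∀ r ∈ R, ∀ x ∈ R, g (r * x) = r * g x) ∧
        (∀ r ∈ R, ∀ x ∈ R, g (x * r) = g x * r) ∧
        (∀ r ∈ R, ∀ x ∈ R, g (r * x) = g r * g x) ∧
        (∃ r ∈ R, g r ≠ 0))) ∧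
    ((∃ g : S → S,
        (∀ r ∈ R, g r ∈ I) ∧
        (∀ r ∈ R, ∀ r' ∈ R, g (r + r') = g r + g r') ∧
        (∀ r ∈ R, ∀ x ∈ R, g (r * x) = r * g x) ∧
        (∀ r ∈ R, ∀ x ∈ R, g (x * r) = g x * r) ∧
        (∀ r ∈ R, ∀ x ∈ R, g (r * x) = g r * g x) ∧
        (∃ r ∈ R, g r ≠ 0)) ↔
      -- (5): a nonzero `R`-homomorphism `I → R/ann_R(I)` and `ann_R(I)` maximal
      ((∃ f : S → Z.ringCon.Quotient,
          (∀ i ∈ I, ∀ j ∈ I, f (i + j) = f i + f j) ∧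
          (∀ r : R, ∀ i ∈ I, f ((r : S) * i) = (r : Z.ringCon.Quotient) * f i) ∧
          (∀ r : R, ∀ i ∈ I, f (i * (r : S)) = f i * (r : Z.ringCon.Quotient)) ∧
          (∀ i ∈ I, ∀ j ∈ I, f (i * j) = f i * f j) ∧
          (∃ i ∈ I, f i ≠ 0)) ∧
        (Z ≠ ⊤ ∧ ∀ J : TwoSidedIdeal R, Z ≤ J → J = Z ∨ J = ⊤))) ∧
    (((∃ f : S → Z.ringCon.Quotient,
          (∀ i ∈ I, ∀ j ∈ I, f (i + j) = f i + f j) ∧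
          (∀ r : R, ∀ i ∈ I, f ((r : S) * i) = (r : Z.ringCon.Quotient) * f i) ∧
          (∀ r : R, ∀ i ∈ I, f (i * (r : S)) = f i * (r : Z.ringCon.Quotient)) ∧
          (∀ i ∈ I, ∀ j ∈ I, f (i * j) = f i * f j) ∧
          (∃ i ∈ I, f i ≠ 0)) ∧
        (Z ≠ ⊤ ∧ ∀ J : TwoSidedIdeal R, Z ≤ J → J = Z ∨ J = ⊤)) ↔
      -- (6): `S` is a central extension of `R` and `I·I ≠ 0`
      (IsCentralExtension R ∧ ∃ x ∈ I, ∃ y ∈ I, x * y ≠ 0)) := by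
  have h12 := hasIdentity_of_existsRIsoToQuotient (R := R) (I := I) (Z := Z)
  have h21 := existsRIsoToQuotient_of_hasIdentity hmax hI hRI hZ
  have h15 := existsRHomToQuotientAndIsMaximal_of_existsRIsoToQuotient (Z := Z) hmax hI hRI
  have h52 := hasIdentity_of_existsRHomToQuotientAndIsMaximal (Z := Z) hmax hI hRI
  have h23 := hasCommutingIdempotent_of_hasIdentity hI
  have h32 := hasIdentity_of_hasCommutingIdempotent hmax hRI
  have h24 := existsRHomToIdeal_of_hasIdentity (R := R) hI
  have h42 := hasIdentity_of_existsRHomToIdeal hmax hRI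
  have h26 := isCentralExtension_of_hasIdentity hmax hI hRI
  have h62 := hasIdentity_of_isCentralExtension hmax hI hRI
  exact ⟨⟨h12, h21⟩, ⟨h23, h32⟩, ⟨h24 ∘ h32, h23 ∘ h42⟩, ⟨h15 ∘ h21 ∘ h42, h24 ∘ h52⟩,
    ⟨h26 ∘ h52, h15 ∘ h21 ∘ h62⟩⟩
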